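/- arXiv:2207.12807 — 2 statements merged into one kernel-verified Lean document; each statement's English description precedes it below -/
import Mathlib

section
/- Factorization frame condition for the IKC NbE model: for all contexts Δ, Γ, Γ', given e : Δ ◁ Γ (IKC modal accessibility) and an order-preserving embedding o : Γ ≤ Γ', there exists a context Δ' together with an order-preserving embedding Δ ≤ Δ' and a proof Δ' ◁ Γ'. -/
namespace IKC

/-- Types of the Fitch-style calculus: base type ι, functions, box. -/
inductive Ty : Type
  | base : Ty
  | arr : Ty → Ty → Ty
  | box : Ty → Ty

/-- Typing contexts: empty, extension by a type, extension by a lock 🔒. -/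
inductive Cx : Type
  | nil : Cx
  | snoc : Cx → Ty → Cx
  | lock : Cx → Cx

/-- IKC modal accessibility relation Δ ◁ Γ: Γ = Δ,🔒,Δ' with Δ' lock-free. -/
inductive Ext : Cx → Cx → Type
  | nil : Ext Γ (.lock Γ)
  | var : Ext Δ Γ → Ext Δ (.snoc Γ A)

/-- Order-preserving embeddings Γ ≤ Γ'. -/
inductive Ope : Cx → Cx → Type
  | base : Ope .nil .nil
  | drop : Ope Γ Γ' → Ope Γ (.snoc Γ' A)
  | keep : Ope Γ Γ' → Ope (.snoc Γ A) (.snoc Γ' A)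
  | keepLock : Ope Γ Γ' → Ope (.lock Γ) (.lock Γ')

/-- Factorization frame condition for the IKC NbE model: given e : Δ ◁ Γ and an
OPE o : Γ ≤ Γ', there exists a context Δ' together with an OPE Δ ≤ Δ' and a
proof Δ' ◁ Γ'. -/
theorem factorization (Δ Γ Γ' : Cx) (e : Ext Δ Γ) (o : Ope Γ Γ') :
    ∃ Δ' : Cx, Nonempty (Ope Δ Δ' × Ext Δ' Γ') := by
  induction o generalizing Δ with
  | base => cases e
  | drop o ih =>
      obtain ⟨Δ', ⟨p, f⟩⟩ := ih _ e
      exact ⟨Δ', ⟨p, .var f⟩⟩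
  | keep o ih =>
      cases e with
      | var e' =>
          obtain ⟨Δ', ⟨p, f⟩⟩ := ih _ e'
          exact ⟨Δ', ⟨p, .var f⟩⟩
  | keepLock o =>
      cases e
      exact ⟨_, ⟨o, .nil⟩⟩

end IKC
end

section
/- Deductive completeness of IKC: let Γ be a context and A a type; if for every possible-world model M the type ∀ w, ⟦Γ⟧_w → ⟦A⟧_w is inhabited, then there exists an IKC term t : Γ ⊢ A. The proof is constructive. -/
namespace IKC

/-- Identity OPE. -/
def idOpe : (Γ : Cx) → Ope Γ Γ
  | .nil => .base
  | .snoc Γ _ => .keep (idOpe Γ)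
  | .lock Γ => .keepLock (idOpe Γ)

/-- De Bruijn variables (no rule through locks). -/
inductive Var : Cx → Ty → Type
  | zero : Var (.snoc Γ A) A
  | succ : Var Γ A → Var (.snoc Γ B) A

/-- Intrinsically-typed terms of IKC. -/
inductive Tm : Cx → Ty → Type
  | var : Var Γ A → Tm Γ A
  | lam : Tm (.snoc Γ A) B → Tm Γ (.arr A B)
  | app : Tm Γ (.arr A B) → Tm Γ A → Tm Γ B
  | box : Tm (.lock Γ) A → Tm Γ (.box A)
  | unbox : Tm Δ (.box A) → Ext Δ Γ → Tm Γ A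

/-- Factorization of e : Δ ◁ Γ along an OPE o : Γ ≤ Γ'. -/
def factor : {Δ Γ Γ' : Cx} → Ext Δ Γ → Ope Γ Γ' → (Δ' : Cx) × Ope Δ Δ' × Ext Δ' Γ'
  | _, _, _, e, .drop o =>
    let f := factor e o
    ⟨f.1, f.2.1, .var f.2.2⟩
  | _, _, _, .nil, .keepLock o => ⟨_, o, .nil⟩
  | _, _, _, .var e, .keep o =>
    let f := factor e o
    ⟨f.1, f.2.1, .var f.2.2⟩

/-- An accessibility proof e : Δ ◁ Γ yields an OPE Δ,🔒 ≤ Γ. -/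
def factorOpe : {Δ Γ : Cx} → Ext Δ Γ → Ope (.lock Δ) Γ
  | _, _, .nil => idOpe _
  | _, _, .var e => .drop (factorOpe e)

/-- Weakening of variables along an OPE. -/
def wkVar : {Γ Γ' : Cx} → Ope Γ Γ' → Var Γ A → Var Γ' A
  | _, _, .drop o, v => .succ (wkVar o v)
  | _, _, .keep _, .zero => .zero
  | _, _, .keep o, .succ v => .succ (wkVar o v)

/-- Weakening (renaming) of terms along an OPE. -/
def wkTm : {Γ Γ' : Cx} → Ope Γ Γ' → Tm Γ A → Tm Γ' A
  | _, _, o, .var v => .var (wkVar o v)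
  | _, _, o, .lam t => .lam (wkTm (.keep o) t)
  | _, _, o, .app t u => .app (wkTm o t) (wkTm o u)
  | _, _, o, .box t => .box (wkTm (.keepLock o) t)
  | _, _, o, .unbox t e => .unbox (wkTm (factor e o).2.1 t) (factor e o).2.2

/-- Substitutions Γ ⊢ˢ s : Δ. -/
inductive Sub : Cx → Cx → Type
  | empty : Sub Γ .nil
  | snoc : Sub Γ Δ → Tm Γ A → Sub Γ (.snoc Δ A)
  | lock : Sub Θ Δ → Ext Θ Γ → Sub Γ (.lock Δ)

/-- Weakening of substitutions along an OPE. -/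
def wkSub : {Γ Γ' Δ : Cx} → Ope Γ Γ' → Sub Γ Δ → Sub Γ' Δ
  | _, _, _, _, .empty => .empty
  | _, _, _, o, .snoc s t => .snoc (wkSub o s) (wkTm o t)
  | _, _, _, o, .lock s e => .lock (wkSub (factor e o).2.1 s) (factor e o).2.2

/-- Identity substitution. -/
def idSub : (Γ : Cx) → Sub Γ Γ
  | .nil => .empty
  | .snoc Γ _ => .snoc (wkSub (.drop (idOpe Γ)) (idSub Γ)) (.var .zero)
  | .lock Γ => .lock (idSub Γ) .nil

/-- Action of a substitution on a variable. -/
def substVar : {Γ Δ : Cx} → Sub Γ Δ → Var Δ A → Tm Γ A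
  | _, _, .snoc _ t, .zero => t
  | _, _, .snoc s _, .succ v => substVar s v

/-- Trimming a substitution along the modal accessibility relation. -/
def trimSub : {Γ Δ Θ : Cx} → Sub Γ Δ → Ext Θ Δ → (Θ' : Cx) × Sub Θ' Θ × Ext Θ' Γ
  | _, _, _, .lock s e, .nil => ⟨_, s, e⟩
  | _, _, _, .snoc s _, .var e => trimSub s e

/-- Application of a substitution to a term. -/
def subst : {Γ Δ : Cx} → Sub Γ Δ → Tm Δ A → Tm Γ A
  | _, _, s, .var v => substVar s v
  | _, _, s, .lam t => .lam (subst (.snoc (wkSub (.drop (idOpe _)) s) (.var .zero)) t)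
  | _, _, s, .app t u => .app (subst s t) (subst s u)
  | _, _, s, .box t => .box (subst (.lock s .nil) t)
  | _, _, s, .unbox t e => .unbox (subst (trimSub s e).2.1 t) (trimSub s e).2.2

/-- The equational theory ≈ of IKC. -/
inductive Conv : {Γ : Cx} → {A : Ty} → Tm Γ A → Tm Γ A → Prop
  | refl (t : Tm Γ A) : Conv t t
  | symm : Conv t u → Conv u t
  | trans : Conv t u → Conv u v → Conv t v
  | congLam : Conv t t' → Conv (.lam t) (.lam t')
  | congApp : Conv t t' → Conv u u' → Conv (.app t u) (.app t' u')
  | congBox : Conv t t' → Conv (.box t) (.box t')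
  | congUnbox {t t' : Tm Δ (.box A)} {e : Ext Δ Γ} :
      Conv t t' → Conv (.unbox t e) (.unbox t' e)
  | betaFun (t : Tm (.snoc Γ A) B) (u : Tm Γ A) :
      Conv (.app (.lam t) u) (subst (.snoc (idSub Γ) u) t)
  | etaFun (t : Tm Γ (.arr A B)) :
      Conv t (.lam (.app (wkTm (.drop (idOpe Γ)) t) (.var .zero)))
  | betaBox (t : Tm (.lock Δ) A) (e : Ext Δ Γ) :
      Conv (.unbox (.box t) e) (wkTm (factorOpe e) t)
  | etaBox (t : Tm Γ (.box A)) :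
      Conv t (.box (.unbox t .nil))

end IKC

namespace IKC

universe u

/-- A possible-world model: a frame (W, ≤, R) with factorization ("R then ≤"
factors as "≤ then R"), satisfying the coherence (functoriality) conditions,
together with a functorial valuation V of the base type. -/
structure PWModel : Type (u + 1) where
  W : Type u
  le : W → W → Type u
  refl : ∀ w, le w w
  trans : ∀ {w w' w''}, le w w' → le w' w'' → le w w''
  trans_assoc : ∀ {w x y z : W} (i : le w x) (j : le x y) (k : le y z),
    trans (trans i j) k = trans i (trans j k)
  refl_trans : ∀ {w x : W} (i : le w x), trans (refl w) i = i
  trans_refl : ∀ {w x : W} (i : le w x), trans i (refl x) = i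
  R : W → W → Type u
  factorW : ∀ {w v v'}, R w v → le v v' → W
  factorLe : ∀ {w v v'} (m : R w v) (i : le v v'), le w (factorW m i)
  factorR : ∀ {w v v'} (m : R w v) (i : le v v'), R (factorW m i) v'
  factorW_refl : ∀ {w v} (m : R w v), factorW m (refl v) = w
  factorLe_refl : ∀ {w v} (m : R w v), HEq (factorLe m (refl v)) (refl w)
  factorR_refl : ∀ {w v} (m : R w v), HEq (factorR m (refl v)) m
  factorW_trans : ∀ {w v v' v''} (m : R w v) (i : le v v') (j : le v' v''),
    factorW m (trans i j) = factorW (factorR m i) j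
  factorLe_trans : ∀ {w v v' v''} (m : R w v) (i : le v v') (j : le v' v''),
    HEq (factorLe m (trans i j)) (trans (factorLe m i) (factorLe (factorR m i) j))
  factorR_trans : ∀ {w v v' v''} (m : R w v) (i : le v v') (j : le v' v''),
    HEq (factorR m (trans i j)) (factorR (factorR m i) j)
  V : W → Type u
  wkV : ∀ {w w'}, le w w' → V w → V w'
  wkV_refl : ∀ {w} (x : V w), wkV (refl w) x = x
  wkV_trans : ∀ {w w' w''} (i : le w w') (j : le w' w'') (x : V w),
    wkV (trans i j) x = wkV j (wkV i x)

/-- Interpretation of types in a possible-world model. -/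
def evalTy (M : PWModel.{u}) : Ty → M.W → Type u
  | .base, w => M.V w
  | .arr A B, w => ∀ w', M.le w w' → evalTy M A w' → evalTy M B w'
  | .box A, w => ∀ w', M.le w w' → ∀ v, M.R w' v → evalTy M A v

/-- Interpretation of contexts in a possible-world model. -/
def evalCx (M : PWModel.{u}) : Cx → M.W → Type u
  | .nil, _ => PUnit
  | .snoc Γ A, w => evalCx M Γ w × evalTy M A w
  | .lock Γ, w => (u_ : M.W) × evalCx M Γ u_ × M.R u_ w

/-- Monotonicity (semantic weakening) for types. -/
def wkTy (M : PWModel.{u}) : (A : Ty) → ∀ {w w'}, M.le w w' → evalTy M A w → evalTy M A w'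
  | .base, _, _, i, x => M.wkV i x
  | .arr _ _, _, _, i, f => fun w'' j a => f w'' (M.trans i j) a
  | .box _, _, _, i, b => fun w'' j v m => b w'' (M.trans i j) v m

/-- Monotonicity (semantic weakening) for contexts. -/
def wkCx (M : PWModel.{u}) : (Γ : Cx) → ∀ {w w'}, M.le w w' → evalCx M Γ w → evalCx M Γ w'
  | .nil, _, _, _, _ => PUnit.unit
  | .snoc Γ A, _, _, i, γ => (wkCx M Γ i γ.1, wkTy M A i γ.2)
  | .lock Γ, _, _, i, γ => ⟨M.factorW γ.2.2 i, wkCx M Γ (M.factorLe γ.2.2 i) γ.2.1, M.factorR γ.2.2 i⟩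

/-- Looking up a variable in an environment. -/
def lookup (M : PWModel.{u}) : {Γ : Cx} → {A : Ty} → Var Γ A → ∀ {w}, evalCx M Γ w → evalTy M A w
  | _, _, .zero, _, γ => γ.2
  | _, _, .succ v, _, γ => lookup M v γ.1

/-- Trimming an environment along the modal accessibility relation. -/
def trimEnv (M : PWModel.{u}) : {Δ Γ : Cx} → Ext Δ Γ → ∀ {w}, evalCx M Γ w → evalCx M (.lock Δ) w
  | _, _, .nil, _, γ => γ
  | _, _, .var e, _, γ => trimEnv M e γ.1

/-- Evaluation of terms in a possible-world model. -/
def evalTm (M : PWModel.{u}) : {Γ : Cx} → {A : Ty} → Tm Γ A → ∀ w, evalCx M Γ w → evalTy M A w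
  | _, _, .var v, _, γ => lookup M v γ
  | _, _, .lam t, _, γ => fun w' i a => evalTm M t w' (wkCx M _ i γ, a)
  | _, _, .app t u_, w, γ => evalTm M t w γ w (M.refl w) (evalTm M u_ w γ)
  | _, _, .box t, _, γ => fun w' i v m => evalTm M t v ⟨w', wkCx M _ i γ, m⟩
  | _, _, .unbox t e, w, γ =>
    let d := trimEnv M e γ
    evalTm M t d.1 d.2.1 d.1 (M.refl d.1) w d.2.2

/-! The canonical model has contexts as worlds, OPEs as `≤` and the accessibility relation `◁`
as `R`, with `factor` as its factorization; the base type holds at `Γ` when `Γ ⊢ ι` is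
inhabited. As this valuation is a proposition, its functoriality laws hold by proof irrelevance.
By recursion on types, as in normalization by evaluation but keeping only inhabitation, a type
holds at `Γ` exactly when it is inhabited in `Γ`. A proof of `⟦Γ⟧ → ⟦A⟧` in the canonical model,
applied to the reflected identity environment of `Γ`, therefore inhabits `Γ ⊢ A`. -/

def compOpe : {Γ Γ' Γ'' : Cx} → Ope Γ Γ' → Ope Γ' Γ'' → Ope Γ Γ''
  | _, _, _, o, .drop p => .drop (compOpe o p)
  | _, _, _, .drop o, .keep p => .drop (compOpe o p)
  | _, _, _, .keep o, .keep p => .keep (compOpe o p)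
  | _, _, _, .keepLock o, .keepLock p => .keepLock (compOpe o p)
  | _, _, _, .base, .base => .base

theorem idOpe_compOpe : ∀ {Γ Γ' : Cx} (o : Ope Γ Γ'), compOpe (idOpe Γ) o = o
  | _, _, .base => rfl
  | _, _, .drop o => by simp [compOpe, idOpe_compOpe o]
  | _, _, .keep o => by simp [idOpe, compOpe, idOpe_compOpe o]
  | _, _, .keepLock o => by simp [idOpe, compOpe, idOpe_compOpe o]

theorem compOpe_idOpe : ∀ {Γ Γ' : Cx} (o : Ope Γ Γ'), compOpe o (idOpe Γ') = o
  | _, _, .base => rfl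
  | _, _, .drop o => by simp [idOpe, compOpe, compOpe_idOpe o]
  | _, _, .keep o => by simp [idOpe, compOpe, compOpe_idOpe o]
  | _, _, .keepLock o => by simp [idOpe, compOpe, compOpe_idOpe o]

theorem compOpe_assoc : ∀ {Γ₀ Γ₁ Γ₂ Γ₃ : Cx} (a : Ope Γ₀ Γ₁) (b : Ope Γ₁ Γ₂) (c : Ope Γ₂ Γ₃),
    compOpe (compOpe a b) c = compOpe a (compOpe b c)
  | _, _, _, _, a, b, .drop c => by simp [compOpe, compOpe_assoc a b c]
  | _, _, _, _, a, .drop b, .keep c => by simp [compOpe, compOpe_assoc a b c]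
  | _, _, _, _, .drop a, .keep b, .keep c => by simp [compOpe, compOpe_assoc a b c]
  | _, _, _, _, .keep a, .keep b, .keep c => by simp [compOpe, compOpe_assoc a b c]
  | _, _, _, _, .keepLock a, .keepLock b, .keepLock c => by
    simp [compOpe, compOpe_assoc a b c]
  | _, _, _, _, .base, .base, .base => rfl

theorem factor_idOpe : ∀ {Δ Γ : Cx} (e : Ext Δ Γ), factor e (idOpe Γ) = ⟨Δ, idOpe Δ, e⟩
  | _, _, .nil => rfl
  | _, _, .var e => by simp only [idOpe, factor]; rw [factor_idOpe e]

theorem factor_compOpe :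
    ∀ {Δ Γ Γ' Γ'' : Cx} (e : Ext Δ Γ) (o : Ope Γ Γ') (p : Ope Γ' Γ''),
    factor e (compOpe o p) =
      ⟨(factor (factor e o).2.2 p).1,
        compOpe (factor e o).2.1 (factor (factor e o).2.2 p).2.1,
        (factor (factor e o).2.2 p).2.2⟩
  | _, _, _, _, e, o, .drop p => by
    simp only [compOpe, factor]; rw [factor_compOpe e o p]
  | _, _, _, _, e, .drop o, .keep p => by
    simp only [compOpe, factor]; rw [factor_compOpe e o p]; rfl
  | _, _, _, _, .var e, .keep o, .keep p => by
    simp only [compOpe, factor]; rw [factor_compOpe e o p]; rfl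
  | _, _, _, _, .nil, .keepLock o, .keepLock p => rfl
  | _, _, _, _, e, .base, .base => nomatch e

def canonicalModel : PWModel.{u} where
  W := ULift.{u} Cx
  le w w' := ULift.{u} (Ope w.down w'.down)
  refl w := ⟨idOpe w.down⟩
  trans i j := ⟨compOpe i.down j.down⟩
  trans_assoc i j k := congrArg ULift.up (compOpe_assoc i.down j.down k.down)
  refl_trans i := congrArg ULift.up (idOpe_compOpe i.down)
  trans_refl i := congrArg ULift.up (compOpe_idOpe i.down)
  R w v := ULift.{u} (Ext w.down v.down)
  factorW m i := ⟨(factor m.down i.down).1⟩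
  factorLe m i := ⟨(factor m.down i.down).2.1⟩
  factorR m i := ⟨(factor m.down i.down).2.2⟩
  factorW_refl m := by dsimp only; rw [factor_idOpe]
  factorLe_refl m := by dsimp only; rw [factor_idOpe]
  factorR_refl m := by dsimp only; rw [factor_idOpe]
  factorW_trans m i j := by dsimp only; rw [factor_compOpe]
  factorLe_trans m i j := by dsimp only; rw [factor_compOpe]
  factorR_trans m i j := by dsimp only; rw [factor_compOpe]
  V w := ULift.{u} (PLift (Nonempty (Tm w.down .base)))
  wkV i x := ⟨⟨x.down.down.map (wkTm i.down)⟩⟩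
  wkV_refl _ := rfl
  wkV_trans _ _ _ := rfl

def reflectReify : (A : Ty) →
    ((Γ : Cx) → Nonempty (Tm Γ A) → evalTy canonicalModel.{u} A ⟨Γ⟩) ×'
      ((Γ : Cx) → evalTy canonicalModel.{u} A ⟨Γ⟩ → Nonempty (Tm Γ A))
  | .base => ⟨fun _ t => ⟨⟨t⟩⟩, fun _ x => x.down.down⟩
  | .arr A B =>
    ⟨fun _ t Γ' i a => (reflectReify B).1 Γ'.down
        (t.elim fun t => ((reflectReify A).2 Γ'.down a).map (.app (wkTm i.down t))),
      fun Γ f => ((reflectReify B).2 (.snoc Γ A)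
        (f ⟨.snoc Γ A⟩ ⟨.drop (idOpe Γ)⟩ ((reflectReify A).1 _ ⟨.var .zero⟩))).map .lam⟩
  | .box A =>
    ⟨fun _ t _ i Δ m =>
        (reflectReify A).1 Δ.down (t.map fun t => .unbox (wkTm i.down t) m.down),
      fun Γ b => ((reflectReify A).2 (.lock Γ) (b ⟨Γ⟩ ⟨idOpe Γ⟩ ⟨.lock Γ⟩ ⟨.nil⟩)).map .box⟩

def reflectIdEnv : (Γ : Cx) → evalCx canonicalModel.{u} Γ ⟨Γ⟩
  | .nil => PUnit.unit
  | .snoc Γ A =>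
    (wkCx canonicalModel Γ ⟨.drop (idOpe Γ)⟩ (reflectIdEnv Γ), (reflectReify A).1 _ ⟨.var .zero⟩)
  | .lock Γ => ⟨⟨Γ⟩, reflectIdEnv Γ, ⟨.nil⟩⟩

/-- Deductive completeness of IKC: if in every possible-world model M the type
∀ w, ⟦Γ⟧_w → ⟦A⟧_w is inhabited, then there is a term Γ ⊢ A of IKC. -/
theorem ikc_deductive_completeness (Γ : Cx) (A : Ty)
    (h : ∀ M : PWModel.{u}, Nonempty (∀ w, evalCx M Γ w → evalTy M A w)) :
    Nonempty (Tm Γ A) :=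
  let ⟨f⟩ := h canonicalModel.{u}
  (reflectReify A).2 Γ (f ⟨Γ⟩ (reflectIdEnv Γ))

end IKC
end
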